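/- arXiv:2303.10970 — 6 statements merged into one kernel-verified Lean document; each statement's English description precedes it below -/
import Mathlib

section
/- For any nonempty set B in R^p and δ > 0, if C is a convex set, then the δ-erosion of the δ-enlargement of C equals C: (C^δ)^{-δ} = C, where C^δ = {x : dist(x,C) ≤ δ} and C^{-δ} = {x : closedBall(x,δ) ⊂ C}. Moreover, this can fail for non-convex sets. -/
/-!
If `x ∉ C` and `z` is the nearest point of `C` to `x`, then `C` lies in the half-space
`{w | ⟪x - z, w - z⟫ ≤ 0}`. Pushing `x` a further distance `δ` away from `z` along `x - z` gives a
point of `closedBall x δ` at distance more than `δ` from that half-space, hence outside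
`cthickening δ C`. For a sphere of radius `δ`, every point of the enclosed ball lies within `δ`
of the sphere, so the centre belongs to the erosion of the enlargement but not to the sphere.
-/

open Metric
open scoped RealInnerProductSpace

section InnerProductSpace

variable {E : Type*} [NormedAddCommGroup E] [InnerProductSpace ℝ E]

theorem le_dist_add_smul_of_forall_inner_nonpos {C : Set E} {z v w : E} (hv : ‖v‖ = 1)
    (hC : ∀ w ∈ C, ⟪v, w - z⟫ ≤ 0) (hw : w ∈ C) (t : ℝ) : t ≤ dist (z + t • v) w := by
  have hvv : ⟪v, v⟫ = 1 := by rw [real_inner_self_eq_norm_sq, hv, one_pow]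
  calc t = ⟪v, z + t • v - w⟫ + ⟪v, w - z⟫ := by
          rw [← inner_add_right, show z + t • v - w + (w - z) = t • v by abel,
            real_inner_smul_right, hvv, mul_one]
    _ ≤ ⟪v, z + t • v - w⟫ := by linarith [hC w hw]
    _ ≤ ‖v‖ * ‖z + t • v - w‖ := real_inner_le_norm _ _
    _ = dist (z + t • v) w := by rw [hv, one_mul, dist_eq_norm]

theorem exists_mem_closedBall_notMem_cthickening {C : Set E} {x z : E} {δ : ℝ}
    (hproj : ∀ w ∈ C, ⟪x - z, w - z⟫ ≤ 0) (hxz : x ≠ z) (hδ : 0 ≤ δ) :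
    ∃ y ∈ closedBall x δ, y ∉ cthickening δ C := by
  set d := ‖x - z‖
  have hd : 0 < d := norm_pos_iff.2 (sub_ne_zero.2 hxz)
  set v := d⁻¹ • (x - z)
  have hv : ‖v‖ = 1 := by rw [norm_smul, norm_inv, norm_norm, inv_mul_cancel₀ hd.ne']
  have hCv : ∀ w ∈ C, ⟪v, w - z⟫ ≤ 0 := fun w hw => by
    rw [real_inner_smul_left]
    exact mul_nonpos_of_nonneg_of_nonpos (inv_nonneg.2 hd.le) (hproj w hw)
  have hx : x = z + d • v := by rw [smul_inv_smul₀ hd.ne', add_sub_cancel]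
  refine ⟨z + (d + δ) • v, ?_, fun hy => ?_⟩
  · rw [mem_closedBall, hx, dist_add_left, dist_eq_norm, ← sub_smul, norm_smul,
      add_sub_cancel_left, hv, mul_one, Real.norm_of_nonneg hδ]
  · obtain ⟨w, hw, hyw⟩ := mem_thickening_iff.1
      (cthickening_subset_thickening' (δ₂ := d + δ) (by positivity) (by linarith) C hy)
    exact hyw.not_ge (le_dist_add_smul_of_forall_inner_nonpos hv hCv hw _)

theorem erosion_cthickening_eq_of_convex [CompleteSpace E] {C : Set E} (hconv : Convex ℝ C)
    (hcl : IsClosed C) {δ : ℝ} (hδ : 0 ≤ δ) :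
    {x | closedBall x δ ⊆ cthickening δ C} = C := by
  ext x
  refine ⟨fun hx => ?_, fun hx => closedBall_subset_cthickening hx δ⟩
  by_contra hxC
  obtain hempty | hne := C.eq_empty_or_nonempty
  · simpa [hempty] using hx (mem_closedBall_self hδ)
  obtain ⟨z, hz, hzmin⟩ := exists_norm_eq_iInf_of_complete_convex hne hcl.isComplete hconv x
  have hproj := (norm_eq_iInf_iff_real_inner_le_zero hconv hz).1 hzmin
  obtain ⟨y, hyx, hyC⟩ :=
    exists_mem_closedBall_notMem_cthickening hproj (ne_of_mem_of_not_mem hz hxC).symm hδ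
  exact hyC (hx hyx)

end InnerProductSpace

section NormedSpace

variable {E : Type*} [NormedAddCommGroup E] [NormedSpace ℝ E] [Nontrivial E]

theorem closedBall_subset_cthickening_sphere (x : E) {r : ℝ} (hr : 0 ≤ r) :
    closedBall x r ⊆ cthickening r (sphere x r) := by
  intro y hy
  rw [mem_closedBall, dist_comm] at hy
  obtain rfl | hxy := eq_or_ne x y
  · obtain ⟨w, hw⟩ := (NormedSpace.sphere_nonempty (x := x)).2 hr
    exact mem_cthickening_of_dist_le x w r _ hw (mem_sphere'.1 hw).le
  have hd : 0 < dist x y := dist_pos.2 hxy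
  refine mem_cthickening_of_dist_le y (AffineMap.lineMap x y (r / dist x y)) r _ ?_ ?_
  · rw [mem_sphere, dist_lineMap_left, Real.norm_of_nonneg (by positivity),
      div_mul_cancel₀ _ hd.ne']
  · rw [dist_comm, dist_lineMap_right, Real.norm_of_nonpos, neg_sub, sub_mul,
      div_mul_cancel₀ _ hd.ne', one_mul]
    · linarith
    · rw [sub_nonpos, one_le_div hd]
      exact hy

theorem exists_isClosed_erosion_cthickening_ne {δ : ℝ} (hδ : 0 < δ) :
    ∃ C : Set E, IsClosed C ∧ C.Nonempty ∧ {x | closedBall x δ ⊆ cthickening δ C} ≠ C := by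
  refine ⟨sphere 0 δ, isClosed_sphere, NormedSpace.sphere_nonempty.2 hδ.le, fun h => ?_⟩
  have h0 : (0 : E) ∈ {x | closedBall x δ ⊆ cthickening δ (sphere 0 δ)} :=
    closedBall_subset_cthickening_sphere 0 hδ.le
  rw [h, mem_sphere, dist_self] at h0
  exact hδ.ne h0

end NormedSpace

/-- For a closed convex set `C ⊆ ℝ^p` and `δ > 0`, the `δ`-erosion of the `δ`-enlargement
of `C` is `C` itself: `(C^δ)^{-δ} = C`. Moreover (for `p ≥ 1`), this can fail for
non-convex (closed) sets. -/
theorem stmt3 {p : ℕ} (hp : 1 ≤ p) (δ : ℝ) (hδ : 0 < δ) :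
    (∀ C : Set (EuclideanSpace ℝ (Fin p)), Convex ℝ C → IsClosed C →
      {x | Metric.closedBall x δ ⊆ Metric.cthickening δ C} = C) ∧
    ∃ C : Set (EuclideanSpace ℝ (Fin p)), IsClosed C ∧ C.Nonempty ∧
      {x | Metric.closedBall x δ ⊆ Metric.cthickening δ C} ≠ C := by
  have : NeZero p := ⟨by omega⟩
  exact ⟨fun C hconv hcl => erosion_cthickening_eq_of_convex hconv hcl hδ.le,
    exists_isClosed_erosion_cthickening_ne hδ⟩
end

section
/- Let B_n, B be convex sets in R^p with B_n → B in Hausdorff distance, and let W_n be random vectors in R^p converging in distribution to W, where W has a continuous bounded density with respect to Lebesgue measure. Then P[W_n ∈ B_n] → P[W ∈ B]. -/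
/-!
The frontier of a convex set is Lebesgue-null, hence `μ`-null, so `μ` gives `B'`, its interior and
its closure the same mass. Hausdorff convergence puts `B n` eventually inside every closed
`δ`-thickening of `B'`, and, because a convex set cannot be fattened by `ε` enough to swallow a
`δ`-ball with `δ > ε` around a point outside it (separating hyperplane), it also puts every inner
parallel set `{x | δ < infEDist x B'ᶜ}` eventually inside `B n`. Portmanteau on these closed and open
sets, with `δ → 0`, bounds the limsup by `μ (closure B')` and the liminf by `μ (interior B')`.
-/

open Filter MeasureTheory
open scoped NNReal ENNReal
open Metric Set Topology

section Geometry

variable {E : Type*} [NormedAddCommGroup E] [NormedSpace ℝ E]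

theorem ContinuousLinearMap.exists_norm_lt_one_lt_apply (f : E →L[ℝ] ℝ) {r : ℝ} (hr : r < ‖f‖) :
    ∃ w : E, ‖w‖ < 1 ∧ r < f w := by
  obtain ⟨v, hv, hrv⟩ := f.exists_lt_apply_of_lt_opNorm hr
  rcases le_or_gt 0 (f v) with hfv | hfv
  · exact ⟨v, hv, by rwa [Real.norm_of_nonneg hfv] at hrv⟩
  · exact ⟨-v, by rwa [norm_neg], by rwa [map_neg, ← abs_of_neg hfv, ← Real.norm_eq_abs]⟩

theorem Convex.mem_of_closedBall_subset_cthickening_of_isClosed {K : Set E} (hK : Convex ℝ K)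
    (hKc : IsClosed K) {x : E} {ε δ : ℝ} (hε : 0 ≤ ε) (hεδ : ε < δ)
    (h : closedBall x δ ⊆ Metric.cthickening ε K) : x ∈ K := by
  have hδ : 0 < δ := hε.trans_lt hεδ
  by_contra hx
  have hK₀ : K.Nonempty := by
    by_contra! hK₀
    simpa [hK₀] using h (mem_closedBall_self hδ.le)
  -- Separate `x` from `K` by `f`, and push `x` by `δ` in a direction where `f` grows nearly
  -- at rate `‖f‖`: the image point is too far from `K` to lie in its `ε`-thickening.
  obtain ⟨f, u, hfK, hfx⟩ := geometric_hahn_banach_closed_point hK hKc hx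
  have hf : 0 < ‖f‖ := by
    obtain ⟨k, hk⟩ := hK₀
    refine norm_pos_iff.2 fun hf ↦ ?_
    have := (hfK k hk).trans hfx
    simp [hf] at this
  obtain ⟨w, hw, hfw⟩ := f.exists_norm_lt_one_lt_apply (r := ε * ‖f‖ / δ)
    (by rw [div_lt_iff₀ hδ]; nlinarith)
  rw [div_lt_iff₀ hδ] at hfw
  set z := x + δ • w
  have hz : z ∈ closedBall x δ := by
    rw [mem_closedBall, dist_eq_norm, add_sub_cancel_left, norm_smul, Real.norm_of_nonneg hδ.le]
    nlinarith [norm_nonneg w]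
  have hzK : infEDist z K < ENNReal.ofReal (δ * f w / ‖f‖) := by
    refine (mem_cthickening_iff.1 (h hz)).trans_lt (ENNReal.ofReal_lt_ofReal_iff'.2 ⟨?_, ?_⟩)
    · rwa [lt_div_iff₀ hf, mul_comm δ]
    · exact div_pos (by nlinarith) hf
  obtain ⟨k, hk, hzk⟩ := infEDist_lt_iff.1 hzK
  rw [edist_lt_ofReal, lt_div_iff₀ hf] at hzk
  have hfzk : f z - f k ≤ ‖f‖ * dist z k := by
    rw [dist_eq_norm, ← map_sub]
    exact (le_abs_self _).trans (f.le_opNorm _)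
  have hfz : f z = f x + δ * f w := by simp [z]
  linarith [hfK k hk]

variable [FiniteDimensional ℝ E]

theorem Convex.interior_closure_eq_interior {C : Set E} (hC : Convex ℝ C) :
    interior (closure C) = interior C := by
  rcases (interior C).eq_empty_or_nonempty with hC₀ | hC₀
  · rw [hC₀, ← not_nonempty_iff_eq_empty, hC.closure.interior_nonempty_iff_affineSpan_eq_top]
    intro hspan
    rw [← not_nonempty_iff_eq_empty, hC.interior_nonempty_iff_affineSpan_eq_top] at hC₀
    refine hC₀ (top_unique (hspan ▸ affineSpan_le.2 ?_))
    exact closure_minimal (subset_affineSpan ℝ C) (affineSpan ℝ C).closed_of_finiteDimensional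
  · exact hC.interior_closure_eq_interior_of_nonempty_interior hC₀

theorem Convex.mem_of_closedBall_subset_cthickening {C : Set E}
    (hC : Convex ℝ C) {x : E} {ε δ : ℝ} (hε : 0 ≤ ε) (hεδ : ε < δ)
    (h : closedBall x δ ⊆ Metric.cthickening ε C) : x ∈ C := by
  set r := (δ - ε) / 2
  have hr : 0 < r := by simp only [r]; linarith
  have hball : closedBall x r ⊆ closure C := fun y hy ↦
    hC.closure.mem_of_closedBall_subset_cthickening_of_isClosed isClosed_closure hε
      (show ε < δ - r by simp only [r]; linarith) fun z hz ↦ by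
        rw [cthickening_closure]
        refine h (mem_closedBall.2 ?_)
        linarith [dist_triangle z y x, mem_closedBall.1 hz, mem_closedBall.1 hy]
  have : x ∈ interior (closure C) :=
    mem_interior.2 ⟨ball x r, ball_subset_closedBall.trans hball, isOpen_ball, mem_ball_self hr⟩
  rw [hC.interior_closure_eq_interior] at this
  exact interior_subset this

theorem Convex.compl_cthickening_compl_subset {C C' : Set E}
    (hC : Convex ℝ C) {ε δ : ℝ} (hε : 0 ≤ ε) (hεδ : ε < δ) (h : C' ⊆ Metric.cthickening ε C) :
    (Metric.cthickening δ C'ᶜ)ᶜ ⊆ C := fun x hx ↦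
  hC.mem_of_closedBall_subset_cthickening hε hεδ fun y hy ↦
    h <| by_contra fun hy' ↦ hx (mem_cthickening_of_dist_le x y δ _ hy' (mem_closedBall'.1 hy))

end Geometry

theorem eventually_subset_cthickening_of_tendsto_hausdorffEDist {X ι : Type*}
    [PseudoEMetricSpace X] {l : Filter ι} {s t : ι → Set X}
    (h : Tendsto (fun i ↦ hausdorffEDist (s i) (t i)) l (𝓝 0)) {δ : ℝ} (hδ : 0 < δ) :
    ∀ᶠ i in l, s i ⊆ cthickening δ (t i) := by
  filter_upwards [h.eventually_lt_const (ENNReal.ofReal_pos.2 hδ)] with i hi x hx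
  exact mem_cthickening_iff.2 ((infEDist_le_hausdorffEDist_of_mem hx).trans hi.le)

section Portmanteau

variable {Ω ι : Type*} [PseudoMetricSpace Ω] [MeasurableSpace Ω] [OpensMeasurableSpace Ω]

theorem tendsto_measure_compl_cthickening_compl (μ : Measure Ω) [IsFiniteMeasure μ]
    (s : Set Ω) : Tendsto (fun r ↦ μ (cthickening r sᶜ)ᶜ) (𝓝 0) (𝓝 (μ (interior s))) := by
  simp_rw [measure_compl isClosed_cthickening.measurableSet (measure_ne_top _ _),
    interior_eq_compl_closure_compl, measure_compl isClosed_closure.measurableSet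
      (measure_ne_top _ _)]
  exact ENNReal.Tendsto.sub tendsto_const_nhds
    (tendsto_measure_cthickening ⟨1, one_pos, measure_ne_top _ _⟩) (.inl (measure_ne_top _ _))

variable {l : Filter ι} {μs : ι → ProbabilityMeasure Ω} {μ : ProbabilityMeasure Ω}
  {B : ι → Set Ω} {C : Set Ω}

theorem limsup_measure_le_measure_closure_of_tendsto (hμ : Tendsto μs l (𝓝 μ))
    (hB : ∀ δ > 0, ∀ᶠ i in l, B i ⊆ cthickening δ C) :
    limsup (fun i ↦ (μs i : Measure Ω) (B i)) l ≤ (μ : Measure Ω) (closure C) := by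
  refine ge_of_tendsto ((tendsto_measure_cthickening ⟨1, one_pos, measure_ne_top _ _⟩).mono_left
    (nhdsWithin_le_nhds (s := Ioi 0))) ?_
  filter_upwards [self_mem_nhdsWithin] with δ (hδ : 0 < δ)
  calc limsup (fun i ↦ (μs i : Measure Ω) (B i)) l
      ≤ limsup (fun i ↦ (μs i : Measure Ω) (cthickening δ C)) l :=
        limsup_le_limsup ((hB δ hδ).mono fun i h ↦ measure_mono h)
    _ ≤ (μ : Measure Ω) (cthickening δ C) :=
        ProbabilityMeasure.limsup_measure_closed_le_of_tendsto hμ isClosed_cthickening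

theorem measure_interior_le_liminf_measure_of_tendsto (hμ : Tendsto μs l (𝓝 μ))
    (hB : ∀ δ > 0, ∀ᶠ i in l, (cthickening δ Cᶜ)ᶜ ⊆ B i) :
    (μ : Measure Ω) (interior C) ≤ liminf (fun i ↦ (μs i : Measure Ω) (B i)) l := by
  refine le_of_tendsto ((tendsto_measure_compl_cthickening_compl _ C).mono_left
    (nhdsWithin_le_nhds (s := Ioi 0))) ?_
  filter_upwards [self_mem_nhdsWithin] with δ (hδ : 0 < δ)
  calc (μ : Measure Ω) (cthickening δ Cᶜ)ᶜ
      ≤ liminf (fun i ↦ (μs i : Measure Ω) (cthickening δ Cᶜ)ᶜ) l :=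
        ProbabilityMeasure.le_liminf_measure_open_of_tendsto hμ isClosed_cthickening.isOpen_compl
    _ ≤ liminf (fun i ↦ (μs i : Measure Ω) (B i)) l :=
        liminf_le_liminf ((hB δ hδ).mono fun i h ↦ measure_mono h)

end Portmanteau

theorem stmt4_general {p : ℕ}
    (B : ℕ → Set (EuclideanSpace ℝ (Fin p))) (B' : Set (EuclideanSpace ℝ (Fin p)))
    (hBconv : ∀ n, Convex ℝ (B n)) (hB'conv : Convex ℝ B')
    (hH : Tendsto (fun n => EMetric.hausdorffEdist (B n) B') atTop (nhds 0))
    (μn : ℕ → ProbabilityMeasure (EuclideanSpace ℝ (Fin p)))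
    (μ : ProbabilityMeasure (EuclideanSpace ℝ (Fin p)))
    (hweak : Tendsto μn atTop (nhds μ))
    (f : EuclideanSpace ℝ (Fin p) → ℝ≥0)
    (hdens : (μ : Measure (EuclideanSpace ℝ (Fin p)))
      = volume.withDensity fun x => (f x : ℝ≥0∞)) :
    Tendsto (fun n => (μn n : Measure (EuclideanSpace ℝ (Fin p))) (B n)) atTop
      (nhds ((μ : Measure (EuclideanSpace ℝ (Fin p))) B')) := by
  have hfrontier : (μ : Measure (EuclideanSpace ℝ (Fin p))) (frontier B') = 0 := by
    rw [hdens]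
    exact withDensity_absolutelyContinuous _ _ (hB'conv.addHaar_frontier volume)
  refine tendsto_of_le_liminf_of_limsup_le ?_ ?_
  · rw [← measure_interior_of_null_frontier hfrontier]
    refine measure_interior_le_liminf_measure_of_tendsto hweak fun δ hδ ↦ ?_
    have hH' : Tendsto (fun n ↦ hausdorffEDist B' (B n)) atTop (𝓝 0) :=
      hH.congr fun _ ↦ hausdorffEDist_comm
    filter_upwards [eventually_subset_cthickening_of_tendsto_hausdorffEDist hH' (half_pos hδ)]
      with n hn
    exact (hBconv n).compl_cthickening_compl_subset (half_pos hδ).le (half_lt_self hδ) hn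
  · rw [← measure_closure_of_null_frontier hfrontier]
    exact limsup_measure_le_measure_closure_of_tendsto hweak fun δ hδ ↦
      eventually_subset_cthickening_of_tendsto_hausdorffEDist hH hδ

/-- If convex sets `B n → B'` in Hausdorff distance and random vectors with laws
`μn n` converge in distribution to a law `μ` having a continuous bounded density with
respect to Lebesgue measure, then `P[W_n ∈ B_n] → P[W ∈ B']`. -/
theorem stmt4 {p : ℕ}
    (B : ℕ → Set (EuclideanSpace ℝ (Fin p))) (B' : Set (EuclideanSpace ℝ (Fin p)))
    (hBconv : ∀ n, Convex ℝ (B n)) (hB'conv : Convex ℝ B')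
    (hH : Tendsto (fun n => EMetric.hausdorffEdist (B n) B') atTop (nhds 0))
    (μn : ℕ → ProbabilityMeasure (EuclideanSpace ℝ (Fin p)))
    (μ : ProbabilityMeasure (EuclideanSpace ℝ (Fin p)))
    (hweak : Tendsto μn atTop (nhds μ))
    (f : EuclideanSpace ℝ (Fin p) → ℝ≥0)
    (hf : Continuous f) (hfb : ∃ M, ∀ x, f x ≤ M)
    (hdens : (μ : Measure (EuclideanSpace ℝ (Fin p)))
      = volume.withDensity fun x => (f x : ℝ≥0∞)) :
    Tendsto (fun n => (μn n : Measure (EuclideanSpace ℝ (Fin p))) (B n)) atTop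
      (nhds ((μ : Measure (EuclideanSpace ℝ (Fin p))) B')) :=
  stmt4_general B B' hBconv hB'conv hH μn μ hweak f hdens
end

section
/- The SLOPE penalty J_λ(u) = Σ_{i=1}^p λ_i |u|_{(i)}, where λ_1 ≥ λ_2 ≥ ... ≥ λ_p ≥ 0 with λ_1 > 0 and |u|_{(1)} ≥ ... ≥ |u|_{(p)} are the absolute values of the coordinates of u sorted in decreasing order, defines a norm on R^p. -/
/-- Sum of the values `|u j|`, sorted in decreasing order, weighted by `lam`:
`J lam u = ∑ i, lam i * |u|_{(i)}` where `|u|_{(1)} ≥ ... ≥ |u|_{(p)}`. -/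
noncomputable def slopeNorm {p : ℕ} (lam u : Fin p → ℝ) : ℝ :=
  ∑ i : Fin p, lam i * |u (Tuple.sort (fun j => -|u j|) i)|

lemma slope_key {p : ℕ} (lam : Fin p → ℝ) (hsorted : Antitone lam)
    (u : Fin p → ℝ) (σ : Equiv.Perm (Fin p)) :
    ∑ i : Fin p, lam i * |u (σ i)| ≤ slopeNorm lam u := by
  set s := Tuple.sort (fun j => -|u j|) with hs
  have hmono : Monotone ((fun j => -|u j|) ∘ s) := Tuple.monotone_sort _
  have hanti : Antitone (fun i => |u (s i)|) := by
    intro a b hab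
    have := hmono hab
    simpa using this
  have hmv : Monovary lam (fun i => |u (s i)|) := hsorted.monovary hanti
  have h := hmv.sum_mul_comp_perm_le_sum_mul (σ := s⁻¹ * σ)
  have heq : ∀ i, |u (s ((s⁻¹ * σ) i))| = |u (σ i)| := by
    intro i; simp
  calc ∑ i : Fin p, lam i * |u (σ i)|
      = ∑ i : Fin p, lam i * |u (s ((s⁻¹ * σ) i))| := by
        simp only [heq]
    _ ≤ ∑ i : Fin p, lam i * |u (s i)| := h
    _ = slopeNorm lam u := rfl

lemma slope_nonneg {p : ℕ} (lam : Fin p → ℝ) (hnonneg : ∀ i, 0 ≤ lam i)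
    (u : Fin p → ℝ) : 0 ≤ slopeNorm lam u :=
  Finset.sum_nonneg fun i _ => mul_nonneg (hnonneg i) (abs_nonneg _)

/-- For `λ_1 ≥ ... ≥ λ_p ≥ 0` with `λ_1 > 0`, the SLOPE penalty
`J_λ(u) = ∑ λ_i |u|_{(i)}` is a norm: it is positive definite, absolutely homogeneous,
and satisfies the triangle inequality. -/
theorem stmt7 {p : ℕ} (hp : 0 < p) (lam : Fin p → ℝ)
    (hsorted : Antitone lam) (hnonneg : ∀ i, 0 ≤ lam i) (hpos : 0 < lam ⟨0, hp⟩) :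
    (∀ u : Fin p → ℝ, slopeNorm lam u = 0 ↔ u = 0) ∧
    (∀ (c : ℝ) (u : Fin p → ℝ), slopeNorm lam (c • u) = |c| * slopeNorm lam u) ∧
    (∀ u v : Fin p → ℝ, slopeNorm lam (u + v) ≤ slopeNorm lam u + slopeNorm lam v) := by
  refine ⟨?_, ?_, ?_⟩
  · intro u
    constructor
    · intro h
      by_contra hu
      obtain ⟨j, hj⟩ : ∃ j, u j ≠ 0 := by
        by_contra hall
        push_neg at hall
        exact hu (funext hall)
      set σ : Equiv.Perm (Fin p) := Equiv.swap ⟨0, hp⟩ j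
      have hkey := slope_key lam hsorted u σ
      have hterm : lam ⟨0, hp⟩ * |u j| ≤ ∑ i : Fin p, lam i * |u (σ i)| := by
        have : lam ⟨0, hp⟩ * |u (σ ⟨0, hp⟩)| = lam ⟨0, hp⟩ * |u j| := by
          simp [σ, Equiv.swap_apply_left]
        rw [← this]
        exact Finset.single_le_sum (f := fun i => lam i * |u (σ i)|)
          (fun i _ => mul_nonneg (hnonneg i) (abs_nonneg _)) (Finset.mem_univ _)
      have hgt : 0 < lam ⟨0, hp⟩ * |u j| :=
        mul_pos hpos (abs_pos.mpr hj)
      linarith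
    · intro h
      subst h
      simp [slopeNorm]
  · intro c u
    apply le_antisymm
    · have hσ := slope_key lam hsorted u (Tuple.sort (fun j => -|(c • u) j|))
      calc slopeNorm lam (c • u)
          = ∑ i : Fin p, lam i * (|c| * |u (Tuple.sort (fun j => -|(c • u) j|) i)|) := by
            simp [slopeNorm, abs_mul]
        _ = |c| * ∑ i : Fin p, lam i * |u (Tuple.sort (fun j => -|(c • u) j|) i)| := by
            rw [Finset.mul_sum]; congr 1; funext i; ring
        _ ≤ |c| * slopeNorm lam u := by
            exact mul_le_mul_of_nonneg_left hσ (abs_nonneg c)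
    · have hσ := slope_key lam hsorted (c • u) (Tuple.sort (fun j => -|u j|))
      calc |c| * slopeNorm lam u
          = ∑ i : Fin p, lam i * |(c • u) (Tuple.sort (fun j => -|u j|) i)| := by
            simp only [slopeNorm, Finset.mul_sum, Pi.smul_apply, smul_eq_mul, abs_mul]
            congr 1; funext i; ring
        _ ≤ slopeNorm lam (c • u) := hσ
  · intro u v
    set σ := Tuple.sort (fun j => -|(u + v) j|)
    calc slopeNorm lam (u + v)
        = ∑ i : Fin p, lam i * |(u + v) (σ i)| := rfl
      _ ≤ ∑ i : Fin p, (lam i * |u (σ i)| + lam i * |v (σ i)|) := by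
          apply Finset.sum_le_sum
          intro i _
          rw [← mul_add]
          exact mul_le_mul_of_nonneg_left
            ((abs_add_le _ _).trans_eq rfl) (hnonneg i)
      _ = (∑ i : Fin p, lam i * |u (σ i)|) + ∑ i : Fin p, lam i * |v (σ i)| :=
          Finset.sum_add_distrib
      _ ≤ slopeNorm lam u + slopeNorm lam v :=
          add_le_add (slope_key lam hsorted u σ) (slope_key lam hsorted v σ)
end

section
/- Fix β⁰ ∈ R^p and λ⁰ ≥ 0 with λⁿ/√n → λ. Then for every u ∈ R^p, J_{λⁿ}(β⁰ + u/√n) − J_{λⁿ}(β⁰) converges as n → ∞ to Σ_{i=1}^p λ_{π(i)} [u_i sgn(β⁰_i) 1{β⁰_i ≠ 0} + |u_i| 1{β⁰_i = 0}], where π is any permutation that sorts |β⁰ + u/√n| in decreasing order for all sufficiently large n; this limit equals the directional derivative J'_λ(β⁰; u) of the SLOPE norm J_λ at β⁰ in direction u. -/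
open Filter

/-- The one-dimensional directional derivative coefficient. -/
noncomputable def dirC (x y : ℝ) : ℝ := if x = 0 then |y| else y * Real.sign x

lemma slopeNorm_eq_of_antitone {p : ℕ} (lam v : Fin p → ℝ) (σ : Equiv.Perm (Fin p))
    (h : Antitone fun i => |v (σ.symm i)|) :
    slopeNorm lam v = ∑ i, lam i * |v (σ.symm i)| := by
  unfold slopeNorm
  have hm : Monotone ((fun j => -|v j|) ∘ (σ.symm : Equiv.Perm (Fin p))) := by
    intro i j hij
    simpa using neg_le_neg (h hij)
  have hs := (Tuple.comp_sort_eq_comp_iff_monotone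
    (f := fun j => -|v j|) (σ := (σ.symm : Equiv.Perm (Fin p)))).mpr hm
  refine Finset.sum_congr rfl fun i _ => ?_
  have h2 := congrFun hs i
  simp only [Function.comp_apply] at h2
  have h3 : |v (σ.symm i)| = |v (Tuple.sort (fun j => -|v j|) i)| := by linarith
  rw [h3]

lemma abs_add_eventually (x y : ℝ) :
    ∀ᶠ t in nhdsWithin (0:ℝ) (Set.Ioi 0), |x + t * y| = |x| + t * dirC x y := by
  by_cases hx : x = 0
  · filter_upwards [self_mem_nhdsWithin] with t ht
    have ht' : (0:ℝ) < t := ht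
    simp [hx, dirC, abs_mul, abs_of_pos ht']
  · have hpos : (0:ℝ) < |x| / (|y| + 1) := by
      have : (0:ℝ) < |x| := abs_pos.mpr hx
      positivity
    have h1 : ∀ᶠ t in nhdsWithin (0:ℝ) (Set.Ioi 0), t < |x| / (|y| + 1) :=
      eventually_nhdsWithin_of_eventually_nhds (Filter.Tendsto.eventually_lt_const hpos tendsto_id)
    filter_upwards [h1, self_mem_nhdsWithin] with t hlt ht
    have ht' : (0:ℝ) < t := ht
    have h2 : t * (|y| + 1) < |x| := (lt_div_iff₀ (by positivity)).mp hlt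
    rcases lt_or_gt_of_ne hx with hneg | hposx
    · have hxy : x + t * y < 0 := by
        have h3 : t * y ≤ t * |y| := mul_le_mul_of_nonneg_left (le_abs_self y) ht'.le
        have habs : |x| = -x := abs_of_neg hneg
        nlinarith
      have hd : dirC x y = y * Real.sign x := by simp [dirC, hx]
      rw [hd, Real.sign_of_neg hneg, abs_of_neg hxy, abs_of_neg hneg]
      ring
    · have hxy : 0 < x + t * y := by
        have h3 : t * (-|y|) ≤ t * y := mul_le_mul_of_nonneg_left (neg_abs_le y) ht'.le
        have habs : |x| = x := abs_of_pos hposx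
        nlinarith
      have hd : dirC x y = y * Real.sign x := by simp [dirC, hx]
      rw [hd, Real.sign_of_pos hposx, abs_of_pos hxy, abs_of_pos hposx]
      ring

lemma seq_to_nhds (A B ca cb : ℝ)
    (h : ∀ᶠ n : ℕ in atTop, B + (Real.sqrt n)⁻¹ * cb ≤ A + (Real.sqrt n)⁻¹ * ca) :
    ∀ᶠ t in nhdsWithin (0:ℝ) (Set.Ioi 0), B + t * cb ≤ A + t * ca := by
  have hsq : Tendsto (fun n : ℕ => Real.sqrt n) atTop atTop := by
    have hr := (tendsto_rpow_atTop (show (0:ℝ) < 1/2 by norm_num)).comp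
      tendsto_natCast_atTop_atTop
    exact hr.congr fun n => (Real.sqrt_eq_rpow _).symm
  have ht0 : Tendsto (fun n : ℕ => (Real.sqrt n)⁻¹) atTop (nhds 0) := hsq.inv_tendsto_atTop
  have hBA : B ≤ A := by
    have hB : Tendsto (fun n : ℕ => B + (Real.sqrt n)⁻¹ * cb) atTop (nhds B) := by
      simpa using tendsto_const_nhds.add (ht0.mul_const cb)
    have hA : Tendsto (fun n : ℕ => A + (Real.sqrt n)⁻¹ * ca) atTop (nhds A) := by
      simpa using tendsto_const_nhds.add (ht0.mul_const ca)
    exact le_of_tendsto_of_tendsto hB hA h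
  rcases eq_or_lt_of_le hBA with hBA' | hBA'
  · have hposev : ∀ᶠ n : ℕ in atTop, 0 < (Real.sqrt n)⁻¹ := by
      filter_upwards [eventually_ge_atTop 1] with n hn
      exact inv_pos.mpr (Real.sqrt_pos.mpr (Nat.cast_pos.mpr hn))
    obtain ⟨n, hn1, hn2⟩ := (h.and hposev).exists
    have hcbca : cb ≤ ca := by
      rw [← hBA'] at hn1
      have := le_of_add_le_add_left hn1
      exact le_of_mul_le_mul_left this hn2
    filter_upwards [self_mem_nhdsWithin] with t ht
    have ht' : (0:ℝ) < t := ht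
    nlinarith [mul_le_mul_of_nonneg_left hcbca ht'.le]
  · have htend : Tendsto (fun t : ℝ => t * (cb - ca)) (nhdsWithin 0 (Set.Ioi 0)) (nhds 0) := by
      have h0 : Tendsto (fun t : ℝ => t * (cb - ca)) (nhds 0) (nhds (0 * (cb - ca))) :=
        tendsto_id.mul_const _
      simpa using h0.mono_left nhdsWithin_le_nhds
    have hev := htend.eventually (Filter.Tendsto.eventually_lt_const (by linarith : (0:ℝ) < A - B)
      tendsto_id)
    filter_upwards [hev] with t h'
    simp only [id_eq] at h'
    nlinarith

/-- If `λⁿ/√n → λ` (componentwise, `λⁿ` nonincreasing nonnegative), then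
`J_{λⁿ}(β⁰ + u/√n) − J_{λⁿ}(β⁰)` converges to
`∑ i λ_{π(i)} [u_i sgn(β⁰_i) 1{β⁰_i ≠ 0} + |u_i| 1{β⁰_i = 0}]`, where `π` is any
permutation sorting `|β⁰ + u/√n|` decreasingly for all large `n`; this limit is the
directional derivative `J'_λ(β⁰; u)` of the SLOPE norm `J_λ` at `β⁰` in direction `u`. -/
theorem stmt11 {p : ℕ} (lamn : ℕ → Fin p → ℝ) (lam : Fin p → ℝ)
    (hsorted : ∀ n, Antitone (lamn n)) (hnonneg : ∀ n i, 0 ≤ lamn n i)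
    (hlim : ∀ i, Tendsto (fun n : ℕ => lamn n i / Real.sqrt n) atTop (nhds (lam i)))
    (β u : Fin p → ℝ) (π : Equiv.Perm (Fin p))
    (hπ : ∀ᶠ n : ℕ in atTop,
      Antitone fun i => |β (π.symm i) + u (π.symm i) / Real.sqrt n|) :
    Tendsto
      (fun n : ℕ =>
        slopeNorm (lamn n) (fun i => β i + u i / Real.sqrt n) - slopeNorm (lamn n) β)
      atTop
      (nhds (∑ i, lam (π i) *
        (if β i = 0 then |u i| else u i * Real.sign (β i)))) ∧
    Tendsto
      (fun t : ℝ => (slopeNorm lam (fun i => β i + t * u i) - slopeNorm lam β) / t)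
      (nhdsWithin 0 (Set.Ioi 0))
      (nhds (∑ i, lam (π i) *
        (if β i = 0 then |u i| else u i * Real.sign (β i)))) := by
  have hgoal : ∀ i, (if β i = 0 then |u i| else u i * Real.sign (β i)) = dirC (β i) (u i) :=
    fun i => rfl
  simp only [hgoal]
  have hsq : Tendsto (fun n : ℕ => Real.sqrt n) atTop atTop := by
    have hr := (tendsto_rpow_atTop (show (0:ℝ) < 1/2 by norm_num)).comp
      tendsto_natCast_atTop_atTop
    exact hr.congr fun n => (Real.sqrt_eq_rpow _).symm
  have hdiv : ∀ (k : Fin p) (n : ℕ), u k / Real.sqrt n = (Real.sqrt n)⁻¹ * u k :=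
    fun k n => div_eq_inv_mul _ _
  -- eventual formula in t
  have hCall : ∀ᶠ t in nhdsWithin (0:ℝ) (Set.Ioi 0),
      ∀ k : Fin p, |β k + t * u k| = |β k| + t * dirC (β k) (u k) := by
    rw [eventually_all]
    exact fun k => abs_add_eventually (β k) (u k)
  have hmap : Tendsto (fun n : ℕ => (Real.sqrt n)⁻¹) atTop (nhdsWithin 0 (Set.Ioi 0)) := by
    rw [tendsto_nhdsWithin_iff]
    refine ⟨hsq.inv_tendsto_atTop, ?_⟩
    filter_upwards [eventually_ge_atTop 1] with n hn
    exact Set.mem_Ioi.mpr (inv_pos.mpr (Real.sqrt_pos.mpr (Nat.cast_pos.mpr hn)))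
  have hCn : ∀ᶠ n : ℕ in atTop,
      ∀ k : Fin p, |β k + (Real.sqrt n)⁻¹ * u k| = |β k| + (Real.sqrt n)⁻¹ * dirC (β k) (u k) :=
    hmap.eventually hCall
  -- limits of coordinates
  have hlim0 : ∀ k : Fin p,
      Tendsto (fun n : ℕ => β k + u k / Real.sqrt n) atTop (nhds (β k)) := by
    intro k
    simpa using tendsto_const_nhds.add (Filter.Tendsto.div_atTop tendsto_const_nhds hsq)
  have hβanti : Antitone fun i => |β (π.symm i)| := by
    intro i j hij
    exact le_of_tendsto_of_tendsto ((hlim0 (π.symm j)).abs) ((hlim0 (π.symm i)).abs)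
      (hπ.mono fun n hn => hn hij)
  have hsum : ∑ i, lam (π i) * dirC (β i) (u i) = ∑ i, lam i * dirC (β (π.symm i)) (u (π.symm i)) := by
    rw [← Equiv.sum_comp π (fun i => lam i * dirC (β (π.symm i)) (u (π.symm i)))]
    simp
  -- Part 1
  have key1 : ∀ᶠ n : ℕ in atTop,
      slopeNorm (lamn n) (fun i => β i + u i / Real.sqrt n) - slopeNorm (lamn n) β =
        ∑ i, (lamn n i * (Real.sqrt n)⁻¹) * dirC (β (π.symm i)) (u (π.symm i)) := by
    filter_upwards [hπ, hCn] with n hA hC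
    have e1 : slopeNorm (lamn n) (fun i => β i + u i / Real.sqrt n) =
        ∑ i, lamn n i * (|β (π.symm i)| + (Real.sqrt n)⁻¹ * dirC (β (π.symm i)) (u (π.symm i))) := by
      rw [slopeNorm_eq_of_antitone (lamn n) _ π hA]
      refine Finset.sum_congr rfl fun i _ => ?_
      have h1 := hC (π.symm i)
      rw [← hdiv] at h1
      rw [h1]
    have e2 : slopeNorm (lamn n) β = ∑ i, lamn n i * |β (π.symm i)| :=
      slopeNorm_eq_of_antitone (lamn n) β π hβanti
    rw [e1, e2, ← Finset.sum_sub_distrib]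
    refine Finset.sum_congr rfl fun i _ => ?_
    ring
  have hlim' : Tendsto
      (fun n : ℕ => ∑ i, (lamn n i * (Real.sqrt n)⁻¹) * dirC (β (π.symm i)) (u (π.symm i)))
      atTop (nhds (∑ i, lam i * dirC (β (π.symm i)) (u (π.symm i)))) := by
    refine tendsto_finset_sum _ fun i _ => ?_
    have h := (hlim i).mul_const (dirC (β (π.symm i)) (u (π.symm i)))
    simpa [div_eq_mul_inv] using h
  have part1 : Tendsto
      (fun n : ℕ =>
        slopeNorm (lamn n) (fun i => β i + u i / Real.sqrt n) - slopeNorm (lamn n) β)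
      atTop (nhds (∑ i, lam (π i) * dirC (β i) (u i))) := by
    rw [hsum]
    exact hlim'.congr' (key1.mono fun n hn => hn.symm)
  -- Part 2
  have hpair : ∀ i j : Fin p, i ≤ j → ∀ᶠ t in nhdsWithin (0:ℝ) (Set.Ioi 0),
      |β (π.symm j)| + t * dirC (β (π.symm j)) (u (π.symm j)) ≤
        |β (π.symm i)| + t * dirC (β (π.symm i)) (u (π.symm i)) := by
    intro i j hij
    apply seq_to_nhds
    filter_upwards [hπ, hCn] with n hA hC
    have h1 := hC (π.symm j)
    have h2 := hC (π.symm i)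
    rw [← hdiv] at h1 h2
    rw [← h1, ← h2]
    exact hA hij
  have hanti_t : ∀ᶠ t in nhdsWithin (0:ℝ) (Set.Ioi 0),
      Antitone fun k => |β (π.symm k) + t * u (π.symm k)| := by
    have hall : ∀ᶠ t in nhdsWithin (0:ℝ) (Set.Ioi 0), ∀ i j : Fin p, i ≤ j →
        |β (π.symm j) + t * u (π.symm j)| ≤ |β (π.symm i) + t * u (π.symm i)| := by
      rw [eventually_all]
      intro i
      rw [eventually_all]
      intro j
      by_cases hij : i ≤ j
      · filter_upwards [hpair i j hij, hCall] with t h1 h2 _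
        rw [h2 (π.symm j), h2 (π.symm i)]
        exact h1
      · filter_upwards with t h
        exact absurd h hij
    filter_upwards [hall] with t h
    exact fun a b hab => h a b hab
  have key2 : ∀ᶠ t in nhdsWithin (0:ℝ) (Set.Ioi 0),
      (slopeNorm lam (fun i => β i + t * u i) - slopeNorm lam β) / t =
        ∑ i, lam (π i) * dirC (β i) (u i) := by
    filter_upwards [hanti_t, hCall, self_mem_nhdsWithin] with t hA hC ht
    have ht' : (0:ℝ) < t := ht
    rw [slopeNorm_eq_of_antitone lam _ π hA, slopeNorm_eq_of_antitone lam β π hβanti, hsum]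
    simp only [hC]
    rw [← Finset.sum_sub_distrib, Finset.sum_div]
    refine Finset.sum_congr rfl fun i _ => ?_
    field_simp
    ring
  exact ⟨part1, tendsto_const_nhds.congr' (key2.mono fun t ht => ht.symm)⟩
end

section
/- The limiting pattern is well defined on pattern classes: if u, u' ∈ R^p satisfy patt(u) = patt(u'), then patt_{β⁰}(u) = patt_{β⁰}(u') for any β⁰ ∈ R^p. -/
open scoped Classical

/-- The SLOPE pattern of `v ∈ ℝ^p`: `patt v i = rank(|v i|) * sgn(v i)`, ranking among
the distinct absolute values (zero entries get 0). -/
noncomputable def slopePatt {p : ℕ} (v : Fin p → ℝ) : Fin p → ℤ := fun i =>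
  (((Finset.univ.image fun j => |v j|).filter fun a => 0 < a ∧ a ≤ |v i|).card : ℤ) *
    (if 0 < v i then 1 else if v i < 0 then -1 else 0)

/-!
Two vectors have the same SLOPE pattern if and only if all pairwise sums `v i + v j` and
differences `v i - v j` have the same signs: these signs record the order of the points `±v i`,
which the pattern preserves and from which it can be read off. For `v = β + t u` every such sum
or difference has the form `a + t x` with `a` depending only on `β`; for small `t > 0` its sign
is that of `a` if `a ≠ 0` and that of `x` otherwise, so it sees `u` only through signs that
`u` shares with `u'`.
-/

open Filter Topology Finset

theorem Finset.card_image_eq_card_image_fibers {α β : Type*} [DecidableEq α] [DecidableEq β]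
    (s : Finset α) (f : α → β) : #(s.image f) = #(s.image fun a => {b ∈ s | f b = f a}) := by
  have himage : s.image (fun a => {b ∈ s | f b = f a}) =
      (s.image f).image fun y => {b ∈ s | f b = y} := by
    rw [image_image]; rfl
  rw [himage]
  refine (card_image_of_injOn ?_).symm
  simp only [Set.InjOn, coe_image, Set.mem_image, mem_coe, forall_exists_index, and_imp,
    forall_apply_eq_imp_iff₂]
  intro a ha b _ hab
  have : a ∈ {c ∈ s | f c = f b} := hab ▸ mem_filter.2 ⟨ha, rfl⟩
  exact (mem_filter.1 this).2

theorem Finset.card_image_eq_card_image_of_eq_iff {α β γ : Type*} [DecidableEq α]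
    [DecidableEq β] [DecidableEq γ] {s : Finset α} {f : α → β} {g : α → γ}
    (h : ∀ a ∈ s, ∀ b ∈ s, f b = f a ↔ g b = g a) : #(s.image f) = #(s.image g) := by
  rw [card_image_eq_card_image_fibers s f, card_image_eq_card_image_fibers s g]
  congr 1
  exact image_congr fun a ha => filter_congr fun b hb => h a ha b hb

theorem eventually_sign_add_mul_eq (a x y : ℝ) (h : SignType.sign x = SignType.sign y) :
    ∀ᶠ t in 𝓝[>] 0, SignType.sign (a + t * x) = SignType.sign (a + t * y) := by
  rcases eq_or_ne a 0 with rfl | ha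
  · filter_upwards [self_mem_nhdsWithin] with t (ht : 0 < t)
    simp [sign_mul, sign_pos ht, h]
  · have hlim (z : ℝ) : ∀ᶠ t in 𝓝[>] 0, SignType.sign (a + t * z) = SignType.sign a := by
      have hcont : Tendsto (fun t : ℝ => a + t * z) (𝓝[>] 0) (𝓝 a) :=
        ((continuous_const.add (continuous_id.mul continuous_const)).tendsto' 0 a
          (by simp)).mono_left nhdsWithin_le_nhds
      exact hcont.eventually ((continuousAt_sign_of_ne_zero ha).eventually_mem
        (isOpen_discrete {SignType.sign a} |>.mem_nhds rfl))
    filter_upwards [hlim x, hlim y] with t hx hy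
    rw [hx, hy]

def SignEquiv {ι : Type*} (v w : ι → ℝ) : Prop :=
  ∀ i j, SignType.sign (v i + v j) = SignType.sign (w i + w j) ∧
    SignType.sign (v i - v j) = SignType.sign (w i - w j)

namespace SignEquiv

variable {ι : Type*} {u v w : ι → ℝ}

theorem symm (h : SignEquiv v w) : SignEquiv w v := fun i j => ⟨(h i j).1.symm, (h i j).2.symm⟩

theorem trans (huv : SignEquiv u v) (hvw : SignEquiv v w) : SignEquiv u w :=
  fun i j => ⟨(huv i j).1.trans (hvw i j).1, (huv i j).2.trans (hvw i j).2⟩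

theorem sign_eq (h : SignEquiv v w) (i : ι) : SignType.sign (v i) = SignType.sign (w i) := by
  have hdouble (x : ℝ) : SignType.sign (x + x) = SignType.sign x := by
    rw [← two_mul, sign_mul, sign_pos two_pos, one_mul]
  rw [← hdouble, (h i i).1, hdouble]

theorem abs_le_abs_iff (h : SignEquiv v w) (i j : ι) : |v i| ≤ |v j| ↔ |w i| ≤ |w j| := by
  have hsq (x y : ℝ) : |x| ≤ |y| ↔ SignType.sign (x - y) * SignType.sign (x + y) ≤ 0 := by
    rw [← sign_mul, sign_nonpos_iff, ← sq_le_sq]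
    constructor <;> intro <;> nlinarith
  rw [hsq, hsq, (h i j).1, (h i j).2]

theorem eventually_add_mul [Finite ι] (h : SignEquiv v w) (β : ι → ℝ) :
    ∀ᶠ t in 𝓝[>] 0, SignEquiv (fun i => β i + t * v i) (fun i => β i + t * w i) := by
  simp only [SignEquiv, eventually_all]
  intro i j
  filter_upwards [eventually_sign_add_mul_eq (β i + β j) _ _ (h i j).1,
    eventually_sign_add_mul_eq (β i - β j) _ _ (h i j).2] with t hsum hdiff
  constructor
  · convert hsum using 2 <;> ring
  · convert hdiff using 2 <;> ring

end SignEquiv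

theorem slopePatt_eq_of_signEquiv {p : ℕ} {v w : Fin p → ℝ} (h : SignEquiv v w) :
    slopePatt v = slopePatt w := by
  have hne (k : Fin p) : v k ≠ 0 ↔ w k ≠ 0 := by
    rw [ne_eq, ne_eq, ← sign_eq_zero_iff, ← sign_eq_zero_iff (a := w k), h.sign_eq]
  funext i
  simp only [slopePatt, filter_image, abs_pos, hne, h.abs_le_abs_iff]
  simp only [← sign_eq_one_iff, ← sign_eq_neg_one_iff, h.sign_eq]
  congr 2
  refine card_image_eq_card_image_of_eq_iff fun a _ b _ => ?_
  rw [le_antisymm_iff, le_antisymm_iff, h.abs_le_abs_iff, h.abs_le_abs_iff]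

-- `rank(|x|) * sgn x`, rewritten as a difference of two monotone counts.
noncomputable def signedRank (S : Finset ℝ) (x : ℝ) : ℤ :=
  #{s ∈ S | 0 < s ∧ s ≤ x} - #{s ∈ S | 0 < s ∧ x ≤ -s}

theorem signedRank_neg (S : Finset ℝ) (x : ℝ) : signedRank S (-x) = -signedRank S x := by
  simp only [signedRank, neg_le_neg_iff, le_neg (b := x)]
  ring

theorem signedRank_eq (S : Finset ℝ) (x : ℝ) :
    signedRank S x =
      #{s ∈ S | 0 < s ∧ s ≤ |x|} * (if 0 < x then 1 else if x < 0 then -1 else 0) := by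
  have hle (hx : x ≤ 0) : #{s ∈ S | 0 < s ∧ s ≤ x} = 0 := by
    simp only [card_eq_zero, filter_eq_empty_iff, not_and, not_le]
    exact fun s _ hs => hx.trans_lt hs
  have hge (hx : 0 ≤ x) : #{s ∈ S | 0 < s ∧ x ≤ -s} = 0 := by
    simp only [card_eq_zero, filter_eq_empty_iff, not_and, not_le]
    exact fun s _ hs => by linarith
  rcases lt_trichotomy x 0 with hx | rfl | hx
  · simp only [signedRank, hle hx.le, abs_of_neg hx, if_neg hx.not_gt, if_pos hx,
      le_neg (a := x)]
    ring
  · simp [signedRank, hle]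
  · simp [signedRank, hge hx.le, abs_of_pos hx, hx]

theorem strictMonoOn_signedRank (S : Finset ℝ) : StrictMonoOn (signedRank S) {x | |x| ∈ S} := by
  intro x hx y hy hxy
  have hpos : {s ∈ S | 0 < s ∧ s ≤ x} ⊆ {s ∈ S | 0 < s ∧ s ≤ y} :=
    monotone_filter_right _ fun s _ h => ⟨h.1, h.2.trans hxy.le⟩
  have hneg : {s ∈ S | 0 < s ∧ y ≤ -s} ⊆ {s ∈ S | 0 < s ∧ x ≤ -s} :=
    monotone_filter_right _ fun s _ h => ⟨h.1, hxy.le.trans h.2⟩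
  have hle := card_le_card hpos
  have hge := card_le_card hneg
  unfold signedRank
  rcases lt_or_ge 0 y with hy0 | hy0
  · have := card_lt_card <| (ssubset_iff_of_subset hpos).2
      ⟨y, by simpa [abs_of_pos hy0, hy0] using hy, by simp [hxy]⟩
    omega
  · have hx0 : x < 0 := hxy.trans_le hy0
    have := card_lt_card <| (ssubset_iff_of_subset hneg).2
      ⟨-x, by simpa [abs_of_neg hx0, hx0] using hx, by simp [hxy]⟩
    omega

theorem StrictMonoOn.sign_sub_eq {α β : Type*} [AddCommGroup α] [LinearOrder α]
    [IsOrderedAddMonoid α] [AddCommGroup β] [LinearOrder β] [IsOrderedAddMonoid β]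
    {f : α → β} {s : Set α} (hf : StrictMonoOn f s) {x y : α} (hx : x ∈ s) (hy : y ∈ s) :
    SignType.sign (f x - f y) = SignType.sign (x - y) := by
  rcases lt_trichotomy x y with hxy | rfl | hxy
  · rw [sign_neg (sub_neg.2 (hf hx hy hxy)), sign_neg (sub_neg.2 hxy)]
  · simp
  · rw [sign_pos (sub_pos.2 (hf hy hx hxy)), sign_pos (sub_pos.2 hxy)]

theorem signEquiv_slopePatt {p : ℕ} (v : Fin p → ℝ) :
    SignEquiv v fun i => (slopePatt v i : ℝ) := by
  set S := univ.image fun j => |v j|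
  have hpatt (i : Fin p) : slopePatt v i = signedRank S (v i) := (signedRank_eq S (v i)).symm
  have hmono : StrictMonoOn (fun x => (signedRank S x : ℝ)) {x | |x| ∈ S} :=
    Int.cast_strictMono.comp_strictMonoOn (strictMonoOn_signedRank S)
  have hmem (i : Fin p) : |v i| ∈ S := mem_image_of_mem _ (mem_univ i)
  have hmem_neg (i : Fin p) : |-v i| ∈ S := (abs_neg (v i)).symm ▸ hmem i
  intro i j
  constructor
  · simpa [hpatt, signedRank_neg] using (hmono.sign_sub_eq (hmem i) (hmem_neg j)).symm
  · simpa [hpatt] using (hmono.sign_sub_eq (hmem i) (hmem j)).symm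

theorem slopePatt_eq_iff_signEquiv {p : ℕ} {v w : Fin p → ℝ} :
    slopePatt v = slopePatt w ↔ SignEquiv v w := by
  refine ⟨fun h => (signEquiv_slopePatt v).trans ?_, slopePatt_eq_of_signEquiv⟩
  rw [h]
  exact (signEquiv_slopePatt w).symm

/-- The limiting pattern is well defined on pattern classes: if `patt u = patt u'`,
then the limiting patterns of `u` and `u'` with respect to any `β⁰` coincide, i.e.
`patt(β⁰ + t•u) = patt(β⁰ + t•u')` for all sufficiently small `t > 0`. -/
theorem stmt13 {p : ℕ} (β u u' : Fin p → ℝ) (h : slopePatt u = slopePatt u') :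
    ∃ ε > (0 : ℝ), ∀ t : ℝ, 0 < t → t < ε →
      slopePatt (fun i => β i + t * u i) = slopePatt (fun i => β i + t * u' i) := by
  have hev : ∀ᶠ t in 𝓝[>] 0,
      slopePatt (fun i => β i + t * u i) = slopePatt (fun i => β i + t * u' i) :=
    ((slopePatt_eq_iff_signEquiv.1 h).eventually_add_mul β).mono fun _ => slopePatt_eq_of_signEquiv
  obtain ⟨ε, hε, hsub⟩ := mem_nhdsGT_iff_exists_Ioo_subset.1 hev
  exact ⟨ε, hε, fun t ht0 htε => hsub ⟨ht0, htε⟩⟩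
end

section
/- Let β⁰ ∈ R^p with cluster partition {I_0, I_1, ..., I_m} by absolute value (I_0 the zero cluster), and let U be the p×m matrix with columns sgn(β⁰) ⊙ 1_{I_j} for j = 1,...,m (i.e., the j-th column has entries sgn(β⁰_i) for i ∈ I_j and 0 elsewhere). Then {u ∈ R^p : patt_{β⁰}(u) = patt(β⁰)} equals the column span of U. -/
open scoped Classical

namespace SlopeAux

variable {p : ℕ}

/-- The rank part of the SLOPE pattern. -/
noncomputable def rnk (v : Fin p → ℝ) (i : Fin p) : ℕ :=
  ((Finset.univ.image fun j => |v j|).filter fun a => 0 < a ∧ a ≤ |v i|).card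

lemma slopePatt_eq (v : Fin p → ℝ) (i : Fin p) :
    slopePatt v i = (rnk v i : ℤ) * (if 0 < v i then 1 else if v i < 0 then -1 else 0) := rfl

lemma rnk_pos {v : Fin p → ℝ} {i : Fin p} (h : v i ≠ 0) : 0 < rnk v i := by
  refine Finset.card_pos.mpr ⟨|v i|, Finset.mem_filter.mpr ⟨?_, abs_pos.mpr h, le_rfl⟩⟩
  exact Finset.mem_image_of_mem _ (Finset.mem_univ i)

lemma rnk_lt {v : Fin p → ℝ} {i j : Fin p} (h : |v i| < |v j|) : rnk v i < rnk v j := by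
  apply Finset.card_lt_card
  rw [Finset.ssubset_def]
  constructor
  · intro a ha
    rw [Finset.mem_filter] at ha ⊢
    exact ⟨ha.1, ha.2.1, ha.2.2.trans h.le⟩
  · intro hsub
    have hmem : |v j| ∈ (Finset.univ.image fun k => |v k|).filter
        fun a => 0 < a ∧ a ≤ |v j| := by
      refine Finset.mem_filter.mpr ⟨Finset.mem_image_of_mem _ (Finset.mem_univ j),
        lt_of_le_of_lt (abs_nonneg _) h, le_rfl⟩
    have := (Finset.mem_filter.mp (hsub hmem)).2.2
    exact absurd this h.not_ge

lemma rnk_inj {v : Fin p → ℝ} {i j : Fin p} (h : rnk v i = rnk v j) : |v i| = |v j| := by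
  rcases lt_trichotomy (|v i|) (|v j|) with hlt | heq | hgt
  · exact absurd h (rnk_lt hlt).ne
  · exact heq
  · exact absurd h.symm (rnk_lt hgt).ne

lemma slopePatt_eq_zero_iff {v : Fin p → ℝ} {i : Fin p} : slopePatt v i = 0 ↔ v i = 0 := by
  constructor
  · intro h
    by_contra hne
    have h1 : (rnk v i : ℤ) ≠ 0 := by exact_mod_cast (rnk_pos hne).ne'
    have h2 : (if 0 < v i then (1:ℤ) else if v i < 0 then -1 else 0) ≠ 0 := by
      rcases lt_or_gt_of_ne hne with hv | hv
      · simp [hv, hv.not_gt]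
      · simp [hv]
    exact (mul_ne_zero h1 h2) h
  · intro h
    rw [slopePatt_eq, h]
    simp

lemma real_sign_mul_self {x : ℝ} (hx : x ≠ 0) : Real.sign x * x = |x| := by
  rcases lt_or_gt_of_ne hx with h | h
  · rw [Real.sign_of_neg h, abs_of_neg h]; ring
  · rw [Real.sign_of_pos h, abs_of_pos h]; ring

/-- Extraction of information from equality of patterns at a nonzero coordinate. -/
lemma analysis {v β' : Fin p → ℝ} (hp : slopePatt v = slopePatt β') {i : Fin p}
    (hi : β' i ≠ 0) :
    v i ≠ 0 ∧ (0 < v i ↔ 0 < β' i) ∧ rnk v i = rnk β' i := by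
  have h := congrFun hp i
  have hvne : v i ≠ 0 := by
    intro h0
    exact hi (slopePatt_eq_zero_iff.mp (h.symm ▸ slopePatt_eq_zero_iff.mpr h0))
  have h1 : 0 < rnk v i := rnk_pos hvne
  have h2 : 0 < rnk β' i := rnk_pos hi
  rw [slopePatt_eq, slopePatt_eq] at h
  rcases lt_or_gt_of_ne hvne with hv | hv <;> rcases lt_or_gt_of_ne hi with hb | hb
  · simp only [hv, hv.not_gt, hb, hb.not_gt, if_true, if_false] at h
    exact ⟨hvne, iff_of_false hv.not_gt hb.not_gt, by omega⟩
  · simp only [hv, hv.not_gt, hb, hb.not_gt, if_true, if_false] at h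
    exfalso; omega
  · simp only [hv, hv.not_gt, hb, hb.not_gt, if_true, if_false] at h
    exfalso; omega
  · simp only [hv, hv.not_gt, hb, hb.not_gt, if_true, if_false] at h
    exact ⟨hvne, iff_of_true hv hb, by omega⟩

/-- If `v` arises from `β` by a sign-preserving, order-preserving deformation of the
absolute values, then the patterns agree. -/
lemma patt_preserved (β v : Fin p → ℝ) (g : ℝ → ℝ)
    (hzero : ∀ i, β i = 0 → v i = 0)
    (hpos : ∀ i, β i ≠ 0 → 0 < g |β i|)
    (habs : ∀ i, β i ≠ 0 → |v i| = g |β i|)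
    (hsgn : ∀ i, β i ≠ 0 → (0 < v i ↔ 0 < β i))
    (hmono : ∀ i j, β i ≠ 0 → β j ≠ 0 → |β i| < |β j| → g |β i| < g |β j|) :
    slopePatt v = slopePatt β := by
  funext i
  by_cases hi : β i = 0
  · have hv := hzero i hi
    simp [slopePatt, hv, hi]
  · have hgpos := hpos i hi
    have hvne : v i ≠ 0 := by
      intro h0
      rw [← habs i hi, h0, abs_zero] at hgpos
      exact lt_irrefl 0 hgpos
    have hs1 : (0 < v i) ↔ (0 < β i) := hsgn i hi
    have hs2 : (v i < 0) ↔ (β i < 0) := by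
      constructor
      · intro h
        exact (lt_or_gt_of_ne hi).resolve_right (fun hb => absurd (hs1.mpr hb) h.not_gt)
      · intro h
        exact (lt_or_gt_of_ne hvne).resolve_right (fun hb => absurd (hs1.mp hb) h.not_gt)
    have hcard : rnk v i = rnk β i := by
      unfold rnk
      rw [Finset.filter_image, Finset.filter_image]
      have hfilter : (Finset.univ.filter fun j => 0 < |v j| ∧ |v j| ≤ |v i|)
          = Finset.univ.filter fun j => 0 < |β j| ∧ |β j| ≤ |β i| := by
        ext j
        simp only [Finset.mem_filter, Finset.mem_univ, true_and]
        by_cases hj : β j = 0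
        · simp [hzero j hj, hj]
        · have h1 : 0 < |v j| := by rw [habs j hj]; exact hpos j hj
          have h2 : 0 < |β j| := abs_pos.mpr hj
          simp only [h1, h2, true_and]
          rw [habs j hj, habs i hi]
          constructor
          · intro h
            by_contra hc
            push_neg at hc
            exact absurd h (hmono i j hi hj hc).not_ge
          · intro h
            rcases h.eq_or_lt with heq | hlt
            · rw [heq]
            · exact (hmono j i hj hi hlt).le
      rw [hfilter]
      have himg : (Finset.univ.filter fun j => 0 < |β j| ∧ |β j| ≤ |β i|).image
            (fun j => |v j|)
          = ((Finset.univ.filter fun j => 0 < |β j| ∧ |β j| ≤ |β i|).image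
            (fun j => |β j|)).image g := by
        rw [Finset.image_image]
        apply Finset.image_congr
        intro j hj
        simp only [Finset.coe_filter, Set.mem_setOf_eq] at hj
        exact habs j (abs_pos.mp hj.2.1)
      rw [himg]
      apply Finset.card_image_of_injOn
      intro a ha b hb hab
      simp only [Finset.coe_image, Set.mem_image, Finset.mem_coe, Finset.mem_filter] at ha hb
      obtain ⟨j, hj, rfl⟩ := ha
      obtain ⟨k, hk, rfl⟩ := hb
      have hjne : β j ≠ 0 := abs_pos.mp hj.2.1
      have hkne : β k ≠ 0 := abs_pos.mp hk.2.1
      rcases lt_trichotomy (|β j|) (|β k|) with h | h | h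
      · exact absurd hab (hmono j k hjne hkne h).ne
      · exact h
      · exact absurd hab.symm (hmono k j hkne hjne h).ne
    rw [slopePatt_eq, slopePatt_eq, hcard]
    congr 1
    by_cases h1 : 0 < β i
    · simp [h1, hs1.mpr h1]
    · by_cases h2 : β i < 0
      · simp [hs1, h1, hs2.mpr h2, h2, (hs2.mpr h2).not_gt]
      · exact absurd ((lt_or_gt_of_ne hi).resolve_left h2) h1

end SlopeAux

open SlopeAux Filter

/-- The set of directions `u` whose limiting pattern w.r.t. `β⁰` equals `patt β⁰`
(i.e. `patt(β⁰ + t•u) = patt β⁰` for all small `t > 0`) is exactly the column span of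
the pattern matrix `U_{β⁰}` whose columns are `sgn(β⁰) ⊙ 1_{I_j}` over the nonzero
clusters `I_j` of `|β⁰|`: namely the `u` with `u i = sgn(β⁰ i) · α(|β⁰ i|)` for some
coefficient function `α` on the cluster values, and `u i = 0` whenever `β⁰ i = 0`. -/
theorem stmt15 {p : ℕ} (β : Fin p → ℝ) :
    {u : Fin p → ℝ | ∃ ε > (0 : ℝ), ∀ t : ℝ, 0 < t → t < ε →
        slopePatt (fun i => β i + t * u i) = slopePatt β} =
      {u : Fin p → ℝ | ∃ α : ℝ → ℝ,
        ∀ i, u i = if β i = 0 then 0 else Real.sign (β i) * α |β i|} := by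
  ext u
  simp only [Set.mem_setOf_eq]
  constructor
  · rintro ⟨ε, hε, hall⟩
    set t : ℝ := ε / 2 with ht_def
    have ht : 0 < t := by positivity
    have htε : t < ε := by rw [ht_def]; linarith
    have hp : slopePatt (fun i => β i + t * u i) = slopePatt β := hall t ht htε
    set v : Fin p → ℝ := fun i => β i + t * u i with hv_def
    -- cluster relation
    have hclu : ∀ i j, β i ≠ 0 → β j ≠ 0 → |β i| = |β j| →
        Real.sign (β i) * u i = Real.sign (β j) * u j := by
      intro i j hi hj hij
      obtain ⟨hvi, hsi, hri⟩ := analysis hp hi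
      obtain ⟨hvj, hsj, hrj⟩ := analysis hp hj
      have hrβ : rnk β i = rnk β j := by
        unfold rnk; rw [hij]
      have hrv : rnk v i = rnk v j := by rw [hri, hrj, hrβ]
      have habs : |v i| = |v j| := rnk_inj hrv
      have key1 : ∀ k, β k ≠ 0 → v k ≠ 0 → (0 < v k ↔ 0 < β k) →
          Real.sign (β k) * v k = |v k| := by
        intro k hk hvk hs
        rcases lt_or_gt_of_ne hk with h | h
        · have hvneg : v k < 0 := (lt_or_gt_of_ne hvk).resolve_right
            (fun hb => absurd (hs.mp hb) h.not_gt)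
          rw [Real.sign_of_neg h, abs_of_neg hvneg]; ring
        · have hvpos : 0 < v k := hs.mpr h
          rw [Real.sign_of_pos h, abs_of_pos hvpos]; ring
      have e1 : Real.sign (β i) * v i = Real.sign (β j) * v j := by
        rw [key1 i hi hvi hsi, key1 j hj hvj hsj, habs]
      have e2 : Real.sign (β i) * β i = |β i| := real_sign_mul_self hi
      have e3 : Real.sign (β j) * β j = |β j| := real_sign_mul_self hj
      have hvid : v i = β i + t * u i := rfl
      have hvjd : v j = β j + t * u j := rfl
      rw [hvid, hvjd] at e1
      have goal2 : t * (Real.sign (β i) * u i) = t * (Real.sign (β j) * u j) := by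
        linear_combination e1 - e2 + e3 - hij
      exact mul_left_cancel₀ ht.ne' goal2
    refine ⟨fun c => if h : ∃ j, β j ≠ 0 ∧ |β j| = c
      then Real.sign (β h.choose) * u h.choose else 0, fun i => ?_⟩
    by_cases hi : β i = 0
    · rw [if_pos hi]
      have hβ0 : slopePatt β i = 0 := slopePatt_eq_zero_iff.mpr hi
      have hv0 : v i = 0 := slopePatt_eq_zero_iff.mp ((congrFun hp i).trans hβ0)
      have : β i + t * u i = 0 := hv0
      rw [hi, zero_add] at this
      rcases mul_eq_zero.mp this with h | h
      · exact absurd h ht.ne'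
      · exact h
    · rw [if_neg hi]
      have hex : ∃ j, β j ≠ 0 ∧ |β j| = |β i| := ⟨i, hi, rfl⟩
      show u i = Real.sign (β i) * (if h : ∃ j, β j ≠ 0 ∧ |β j| = |β i|
        then Real.sign (β h.choose) * u h.choose else 0)
      rw [dif_pos hex]
      obtain ⟨hj1, hj2⟩ := hex.choose_spec
      have hc := hclu i hex.choose hi hj1 hj2.symm
      rw [← hc, ← mul_assoc]
      have hsq : Real.sign (β i) * Real.sign (β i) = 1 := by
        rcases Real.sign_apply_eq_of_ne_zero (β i) hi with h | h <;> rw [h] <;> norm_num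
      rw [hsq, one_mul]
  · rintro ⟨α, hα⟩
    -- eventual properties
    have h1 : ∀ i : Fin p, ∀ᶠ t : ℝ in nhds 0, β i ≠ 0 → 0 < |β i| + t * α |β i| := by
      intro i
      by_cases hi : β i = 0
      · exact Eventually.of_forall fun t h => absurd hi h
      · have hcont : Filter.Tendsto (fun t : ℝ => |β i| + t * α |β i|)
            (nhds 0) (nhds (|β i|)) := by
          have hc : Continuous fun t : ℝ => |β i| + t * α |β i| := by continuity
          simpa using hc.tendsto 0
        exact (tendsto_const_nhds.eventually_lt hcont (abs_pos.mpr hi)).mono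
          fun t h _ => h
    have h2 : ∀ i j : Fin p, ∀ᶠ t : ℝ in nhds 0, β i ≠ 0 → β j ≠ 0 → |β i| < |β j| →
        |β i| + t * α |β i| < |β j| + t * α |β j| := by
      intro i j
      by_cases hij : |β i| < |β j|
      · have hci : Filter.Tendsto (fun t : ℝ => |β i| + t * α |β i|)
            (nhds 0) (nhds (|β i|)) := by
          have hc : Continuous fun t : ℝ => |β i| + t * α |β i| := by continuity
          simpa using hc.tendsto 0
        have hcj : Filter.Tendsto (fun t : ℝ => |β j| + t * α |β j|)
            (nhds 0) (nhds (|β j|)) := by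
          have hc : Continuous fun t : ℝ => |β j| + t * α |β j| := by continuity
          simpa using hc.tendsto 0
        exact (hci.eventually_lt hcj hij).mono fun t h _ _ _ => h
      · exact Eventually.of_forall fun t _ _ h => absurd h hij
    have H : ∀ᶠ t : ℝ in nhds 0,
        (∀ i, β i ≠ 0 → 0 < |β i| + t * α |β i|) ∧
        (∀ i j, β i ≠ 0 → β j ≠ 0 → |β i| < |β j| →
          |β i| + t * α |β i| < |β j| + t * α |β j|) :=
      (eventually_all.mpr h1).and (eventually_all.mpr fun i => eventually_all.mpr (h2 i))
    have H' : ∀ᶠ t : ℝ in nhdsWithin 0 (Set.Ioi 0),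
        (∀ i, β i ≠ 0 → 0 < |β i| + t * α |β i|) ∧
        (∀ i j, β i ≠ 0 → β j ≠ 0 → |β i| < |β j| →
          |β i| + t * α |β i| < |β j| + t * α |β j|) :=
      H.filter_mono nhdsWithin_le_nhds
    obtain ⟨ε, hε, hsub⟩ := mem_nhdsGT_iff_exists_Ioo_subset.mp H'
    refine ⟨ε, hε, fun t ht1 ht2 => ?_⟩
    have hP := hsub ⟨ht1, ht2⟩
    simp only [Set.mem_setOf_eq] at hP
    have hvrep : ∀ i, β i ≠ 0 →
        β i + t * u i = Real.sign (β i) * (|β i| + t * α |β i|) := by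
      intro i hi
      rw [hα i, if_neg hi]
      have hs : Real.sign (β i) * β i = |β i| := real_sign_mul_self hi
      rcases Real.sign_apply_eq_of_ne_zero (β i) hi with h | h <;> rw [h] at hs ⊢
      · linear_combination -hs
      · linear_combination hs
    apply patt_preserved β _ (fun c => c + t * α c)
    · intro i hi
      simp [hα i, hi]
    · intro i hi
      exact hP.1 i hi
    · intro i hi
      rw [hvrep i hi, abs_mul, abs_of_pos (hP.1 i hi)]
      rcases Real.sign_apply_eq_of_ne_zero (β i) hi with h | h <;> rw [h] <;> norm_num
    · intro i hi
      rw [hvrep i hi]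
      have hw := hP.1 i hi
      rcases lt_or_gt_of_ne hi with h | h
      · rw [Real.sign_of_neg h]
        constructor <;> intro hh <;> nlinarith
      · rw [Real.sign_of_pos h]
        constructor <;> intro hh <;> nlinarith
    · intro i j hi hj hlt
      exact hP.2 i j hi hj hlt
end
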